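/- For real ω > 0 and real α > 0, (e^{-ω α²}/(2πi)) ∫_{-∞}^∞ e^{-ω t²} / (t − iα) dt = (1/2)·erfc(α√ω), where erfc z = (2/√π) ∫_z^∞ e^{-s²} ds. -/

import Mathlib

/-!
Writing `1 / (t - iα) = i ∫₀^∞ e^{-(α + it)s} ds` and exchanging the order of integration turns
the left-hand side into the Laplace transform of the Fourier transform of the Gaussian,
`i √(π/ω) ∫₀^∞ e^{-αs - s²/(4ω)} ds`. Completing the square,
`ωα² + αs + s²/(4ω) = (s/(2√ω) + α√ω)²`, and substituting `u = s/(2√ω) + α√ω` produces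
`2√ω ∫_{α√ω}^∞ e^{-u²} du`, i.e. a multiple of `erfc (α√ω)`.
-/

open MeasureTheory Real

/-- The complementary error function `erfc x = (2/√π) ∫_x^∞ e^{-s²} ds`. -/
noncomputable def erfc (x : ℝ) : ℝ :=
  (2 / Real.sqrt π) * ∫ s in Set.Ioi x, Real.exp (-s ^ 2)

open Set Complex

section IoiChangeVariables

variable {E : Type*} [NormedAddCommGroup E] [NormedSpace ℝ E]

theorem integral_Ioi_comp_add_right (g : ℝ → E) (a : ℝ) :
    ∫ x in Ioi 0, g (x + a) = ∫ x in Ioi a, g x := by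
  simpa [preimage_add_const_Ioi] using
    (measurePreserving_add_right volume a).setIntegral_preimage_emb
      (measurableEmbedding_addRight a) g (Ioi a)

theorem integral_Ioi_comp_mul_add (g : ℝ → E) (a : ℝ) {b : ℝ} (hb : 0 < b) :
    ∫ x in Ioi 0, g (b * x + a) = b⁻¹ • ∫ x in Ioi a, g x := by
  rw [integral_comp_mul_left_Ioi (fun x ↦ g (x + a)) 0 hb, mul_zero,
    integral_Ioi_comp_add_right]

end IoiChangeVariables

theorem inv_eq_integral_Ioi_cexp_neg_mul {z : ℂ} (hz : 0 < z.re) :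
    z⁻¹ = ∫ s in Ioi (0 : ℝ), cexp (-z * s) := by
  rw [integral_exp_mul_complex_Ioi (by simpa using hz)]
  simp [neg_div]

theorem inv_sub_I_mul_eq_integral_Ioi (t : ℝ) {α : ℝ} (hα : 0 < α) :
    ((t : ℂ) - I * α)⁻¹ = I * ∫ s in Ioi (0 : ℝ), cexp (-(α + I * t) * s) := by
  rw [← inv_eq_integral_Ioi_cexp_neg_mul (by simpa using hα),
    show (t : ℂ) - I * α = -I * (α + I * t) by ring_nf; rw [I_sq]; ring]
  simp only [mul_inv, inv_neg, inv_I, neg_neg]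

theorem integrable_prod_mul_cexp_neg_mul {f : ℝ → ℂ} (hf : Integrable f) {α : ℝ} (hα : 0 < α) :
    Integrable (Function.uncurry fun t s : ℝ ↦ f t * cexp (-(α + I * t) * s))
      (volume.prod (volume.restrict (Ioi 0))) := by
  refine (hf.norm.mul_prod (exp_neg_integrableOn_Ioi 0 hα)).mono' ?_ (ae_of_all _ fun ⟨t, s⟩ ↦ ?_)
  · exact hf.aestronglyMeasurable.comp_fst.mul (by fun_prop : Continuous _).aestronglyMeasurable
  · simp [norm_exp, mul_re]

theorem integral_div_sub_I_mul {f : ℝ → ℂ} (hf : Integrable f) {α : ℝ} (hα : 0 < α) :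
    ∫ t, f t / (t - I * α) =
      I * ∫ s in Ioi (0 : ℝ), cexp (-α * s) * ∫ t, f t * cexp (-I * t * s) := by
  calc ∫ t, f t / (t - I * α)
      = ∫ t, I * ∫ s in Ioi (0 : ℝ), f t * cexp (-(α + I * t) * s) := by
        congr 1 with t
        rw [div_eq_mul_inv, inv_sub_I_mul_eq_integral_Ioi t hα, integral_const_mul]
        ring
    _ = I * ∫ s in Ioi (0 : ℝ), ∫ t, f t * cexp (-(α + I * t) * s) := by
        rw [integral_const_mul, integral_integral_swap (integrable_prod_mul_cexp_neg_mul hf hα)]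
    _ = _ := by
        congr 1
        refine setIntegral_congr_fun measurableSet_Ioi fun s _ ↦ ?_
        rw [← integral_const_mul]
        congr 1 with t
        rw [mul_left_comm, ← Complex.exp_add]
        ring_nf

theorem integral_gaussian_mul_cexp_neg_I_mul {ω : ℝ} (hω : 0 < ω) (s : ℝ) :
    ∫ t : ℝ, cexp (-(ω * t ^ 2 : ℝ)) * cexp (-I * t * s) =
      (√(π / ω) * rexp (-s ^ 2 / (4 * ω)) : ℝ) := by
  have hπω : (π / ω : ℂ) ^ (1 / 2 : ℂ) = (√(π / ω) : ℝ) := by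
    rw [sqrt_eq_rpow, ofReal_cpow (by positivity)]
    push_cast
    rfl
  have hint : ∀ t : ℝ, cexp (-(ω * t ^ 2 : ℝ)) * cexp (-I * t * s) =
      cexp (I * (-s : ℝ) * t) * cexp (-ω * t ^ 2) := fun t ↦ by
    rw [mul_comm]; push_cast; ring_nf
  simp_rw [hint]
  rw [fourierIntegral_gaussian (by simpa using hω), hπω]
  push_cast
  ring_nf

theorem integral_Ioi_exp_neg_mul_mul_exp_neg_sq_div {ω : ℝ} (hω : 0 < ω) (α : ℝ) :
    ∫ s in Ioi 0, rexp (-α * s) * rexp (-s ^ 2 / (4 * ω)) =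
      2 * √ω * rexp (ω * α ^ 2) * ∫ u in Ioi (α * √ω), rexp (-u ^ 2) := by
  have hc : 0 < √ω := sqrt_pos.mpr hω
  have hsquare : ∀ s : ℝ, rexp (-α * s) * rexp (-s ^ 2 / (4 * ω)) =
      rexp (ω * α ^ 2) * rexp (-((2 * √ω)⁻¹ * s + α * √ω) ^ 2) := fun s ↦ by
    rw [← Real.exp_add, ← Real.exp_add]
    congr 1
    field_simp
    rw [sq_sqrt hω.le]
    ring
  have hsubst := integral_Ioi_comp_mul_add (fun u ↦ rexp (-u ^ 2)) (α * √ω)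
    (inv_pos.mpr (mul_pos two_pos hc))
  simp only [inv_inv, smul_eq_mul] at hsubst
  simp_rw [hsquare, integral_const_mul, hsubst]
  ring

theorem van_der_waerden_pole_integral (ω α : ℝ) (hω : 0 < ω) (hα : 0 < α) :
    Complex.exp (-(ω * α ^ 2 : ℝ)) / (2 * π * Complex.I) *
        ∫ t : ℝ, Complex.exp (-(ω * t ^ 2 : ℝ)) / ((t : ℂ) - Complex.I * α) =
      ((1 : ℂ) / 2) * (erfc (α * Real.sqrt ω) : ℝ) := by
  have hgauss : Integrable fun t : ℝ ↦ cexp (-(ω * t ^ 2 : ℝ)) := by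
    simpa using integrable_cexp_neg_mul_sq (b := ω) (by simpa using hω)
  have hreal : ∫ s in Ioi (0 : ℝ), cexp (-α * s) * (√(π / ω) * rexp (-s ^ 2 / (4 * ω)) : ℝ) =
      (√(π / ω) * ∫ s in Ioi 0, rexp (-α * s) * rexp (-s ^ 2 / (4 * ω)) : ℝ) := by
    rw [← integral_const_mul, ← integral_complex_ofReal]
    congr 1 with s
    push_cast
    ring
  rw [integral_div_sub_I_mul hgauss hα]
  simp_rw [integral_gaussian_mul_cexp_neg_I_mul hω]
  rw [hreal, integral_Ioi_exp_neg_mul_mul_exp_neg_sq_div hω, erfc, sqrt_div' _ hω.le]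
  have hπ : (π : ℂ) = (√π : ℂ) ^ 2 := by rw [← ofReal_pow, sq_sqrt pi_pos.le]
  have hsπ : (√π : ℂ) ≠ 0 := by exact_mod_cast (sqrt_pos.mpr pi_pos).ne'
  have hsω : (√ω : ℂ) ≠ 0 := by exact_mod_cast (sqrt_pos.mpr hω).ne'
  rw [hπ]
  push_cast
  field_simp
  rw [← Complex.exp_add, neg_add_cancel, Complex.exp_zero, one_mul]
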